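/- Suppose X_r has full column rank with λ_min(n^{-1} X_r^T X_r) ≥ ν for some ν > 0, and let σ̃₀² > 0. Then for every y ∈ ℝⁿ, 0 ≤ R_r − R_r^* ≤ ‖y‖₂² / (n ν σ̃₀²). -/

import Mathlib

open Matrix

noncomputable section

/-- The `n × |S|` submatrix of `X` consisting of the columns indexed by `S`. -/
def subcols {n p : ℕ} (X : Matrix (Fin n) (Fin p) ℝ) (S : Finset (Fin p)) :
    Matrix (Fin n) {j // j ∈ S} ℝ :=
  Matrix.of fun i j => X i j.1

/-- `Φ_S = X_S (X_Sᵀ X_S)⁻¹ X_Sᵀ`, the orthogonal projection onto the column span of `X_S`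
(when `X_S` has full column rank). -/
def proj {n p : ℕ} (X : Matrix (Fin n) (Fin p) ℝ) (S : Finset (Fin p)) :
    Matrix (Fin n) (Fin n) ℝ :=
  subcols X S * ((subcols X S)ᵀ * subcols X S)⁻¹ * (subcols X S)ᵀ

/-- `R_S = yᵀ(Iₙ − X_S(X_Sᵀ X_S + σ̃₀⁻² I)⁻¹ X_Sᵀ) y` (here `t = σ̃₀²`). -/
def Rreg {n p : ℕ} (X : Matrix (Fin n) (Fin p) ℝ) (S : Finset (Fin p)) (t : ℝ)
    (y : Fin n → ℝ) : ℝ :=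
  y ⬝ᵥ (((1 : Matrix (Fin n) (Fin n) ℝ) -
      subcols X S * ((subcols X S)ᵀ * subcols X S + t⁻¹ • 1)⁻¹ * (subcols X S)ᵀ).mulVec y)

/-- `R_S^* = yᵀ(Iₙ − Φ_S) y`. -/
def Rstar {n p : ℕ} (X : Matrix (Fin n) (Fin p) ℝ) (S : Finset (Fin p))
    (y : Fin n → ℝ) : ℝ :=
  y ⬝ᵥ (((1 : Matrix (Fin n) (Fin n) ℝ) - proj X S).mulVec y)
/-!
With `M = X_rᵀ X_r`, `w = X_rᵀ y` and `c = σ̃₀⁻²`, the gap `R_r − R_r^*` is the quadratic form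
`wᵀ (M⁻¹ − (M + c I)⁻¹) w`. Substituting `w = (M + c I) v` turns it into `c ‖v‖² + c² vᵀ M⁻¹ v`,
which is nonnegative, and the eigenvalue bound `M ≥ n ν` (hence `M⁻¹ ≤ (n ν)⁻¹`) gives
`n ν · gap ≤ c · wᵀ M⁻¹ w = c · yᵀ Φ_r y ≤ c ‖y‖²`, the last step because `Φ_r` is an orthogonal
projection.
-/

namespace Matrix

variable {ι : Type*} [Fintype ι]

theorem dotProduct_self_nonneg {𝕜 : Type*} [Ring 𝕜] [LinearOrder 𝕜] [IsStrictOrderedRing 𝕜]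
    (v : ι → 𝕜) : 0 ≤ v ⬝ᵥ v :=
  Fintype.sum_nonneg fun i => mul_self_nonneg (v i)

theorem dotProduct_mul_mul_transpose_mulVec {m : Type*} [Fintype m] {R : Type*} [CommSemiring R]
    (A : Matrix m ι R) (D : Matrix ι ι R) (y : m → R) :
    y ⬝ᵥ (A * D * Aᵀ) *ᵥ y = (Aᵀ *ᵥ y) ⬝ᵥ D *ᵥ (Aᵀ *ᵥ y) := by
  rw [← mulVec_mulVec, ← mulVec_mulVec, dotProduct_mulVec, ← mulVec_transpose]

variable [DecidableEq ι] {𝕜 : Type*} [Field 𝕜]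

theorem mulVec_nonsing_inv_mulVec {M : Matrix ι ι 𝕜} (hM : IsUnit M) (v : ι → 𝕜) :
    M *ᵥ (M⁻¹ *ᵥ v) = v := by
  rw [mulVec_mulVec, mul_nonsing_inv _ ((isUnit_iff_isUnit_det M).mp hM), one_mulVec]

theorem nonsing_inv_mulVec_mulVec {M : Matrix ι ι 𝕜} (hM : IsUnit M) (v : ι → 𝕜) :
    M⁻¹ *ᵥ (M *ᵥ v) = v := by
  rw [mulVec_mulVec, nonsing_inv_mul _ ((isUnit_iff_isUnit_det M).mp hM), one_mulVec]

theorem dotProduct_inv_mulVec_sub_of_add_smul_one {M : Matrix ι ι 𝕜} {c : 𝕜} (hMs : M.IsSymm)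
    (hMu : IsUnit M) (v : ι → 𝕜) :
    (M + c • 1) *ᵥ v ⬝ᵥ M⁻¹ *ᵥ ((M + c • 1) *ᵥ v) - (M + c • 1) *ᵥ v ⬝ᵥ v =
      c * (v ⬝ᵥ v) + c ^ 2 * (v ⬝ᵥ M⁻¹ *ᵥ v) := by
  have hMM : M *ᵥ v ⬝ᵥ M⁻¹ *ᵥ v = v ⬝ᵥ v := by
    rw [← vecMul_transpose, ← dotProduct_mulVec, hMs.eq, mulVec_nonsing_inv_mulVec hMu]
  simp only [add_mulVec, smul_mulVec, one_mulVec, mulVec_add, mulVec_smul,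
    nonsing_inv_mulVec_mulVec hMu, add_dotProduct, dotProduct_add, smul_dotProduct,
    dotProduct_smul, smul_eq_mul, hMM]
  ring

variable [LinearOrder 𝕜] [IsStrictOrderedRing 𝕜]

section Coercive

variable {M : Matrix ι ι 𝕜} {a : 𝕜} (ha : 0 < a) (hM : ∀ v, a * (v ⬝ᵥ v) ≤ v ⬝ᵥ M *ᵥ v)
include ha hM

theorem isUnit_of_coercive : IsUnit M := by
  rw [← mulVec_injective_iff_isUnit]
  intro v w hvw
  have h := hM (v - w)
  rw [mulVec_sub, hvw, sub_self, dotProduct_zero] at h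
  have h0 : (v - w) ⬝ᵥ (v - w) = 0 :=
    le_antisymm (nonpos_of_mul_nonpos_right h ha) (dotProduct_self_nonneg _)
  exact sub_eq_zero.mp (dotProduct_self_eq_zero.mp h0)

theorem isUnit_add_smul_one_of_coercive {c : 𝕜} (hc : 0 ≤ c) : IsUnit (M + c • 1) := by
  refine isUnit_of_coercive (add_pos_of_pos_of_nonneg ha hc) fun v => ?_
  rw [add_mulVec, smul_mulVec, one_mulVec, dotProduct_add, dotProduct_smul, smul_eq_mul, add_mul]
  linarith [hM v]

theorem dotProduct_inv_mulVec_nonneg (v : ι → 𝕜) : 0 ≤ v ⬝ᵥ M⁻¹ *ᵥ v := by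
  obtain ⟨u, rfl⟩ : ∃ u, M *ᵥ u = v :=
    ⟨M⁻¹ *ᵥ v, mulVec_nonsing_inv_mulVec (isUnit_of_coercive ha hM) v⟩
  rw [nonsing_inv_mulVec_mulVec (isUnit_of_coercive ha hM), dotProduct_comm]
  nlinarith [hM u, dotProduct_self_nonneg u]

theorem mul_dotProduct_inv_mulVec_le (v : ι → 𝕜) : a * (v ⬝ᵥ M⁻¹ *ᵥ v) ≤ v ⬝ᵥ v := by
  obtain ⟨u, rfl⟩ : ∃ u, M *ᵥ u = v :=
    ⟨M⁻¹ *ᵥ v, mulVec_nonsing_inv_mulVec (isUnit_of_coercive ha hM) v⟩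
  rw [nonsing_inv_mulVec_mulVec (isUnit_of_coercive ha hM), dotProduct_comm]
  have h := dotProduct_self_nonneg (M *ᵥ u - a • u)
  simp only [sub_dotProduct, dotProduct_sub, smul_dotProduct, dotProduct_smul, smul_eq_mul] at h
  rw [dotProduct_comm (M *ᵥ u) u] at h
  nlinarith [hM u]

end Coercive

section Resolvent

variable {M : Matrix ι ι 𝕜} {a c : 𝕜} (ha : 0 < a) (hM : ∀ v, a * (v ⬝ᵥ v) ≤ v ⬝ᵥ M *ᵥ v)
  (hMs : M.IsSymm) (hc : 0 ≤ c)
include ha hM hMs hc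

theorem dotProduct_inv_add_smul_one_mulVec_le (w : ι → 𝕜) :
    w ⬝ᵥ (M + c • 1)⁻¹ *ᵥ w ≤ w ⬝ᵥ M⁻¹ *ᵥ w := by
  have hN := isUnit_add_smul_one_of_coercive ha hM hc
  obtain ⟨v, rfl⟩ : ∃ v, (M + c • 1) *ᵥ v = w := ⟨_, mulVec_nonsing_inv_mulVec hN w⟩
  have hgap := dotProduct_inv_mulVec_sub_of_add_smul_one (c := c) hMs (isUnit_of_coercive ha hM) v
  rw [nonsing_inv_mulVec_mulVec hN]
  nlinarith [dotProduct_self_nonneg v, dotProduct_inv_mulVec_nonneg ha hM v, sq_nonneg c]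

theorem mul_sub_dotProduct_inv_add_smul_one_mulVec_le (w : ι → 𝕜) :
    a * (w ⬝ᵥ M⁻¹ *ᵥ w - w ⬝ᵥ (M + c • 1)⁻¹ *ᵥ w) ≤ c * (w ⬝ᵥ M⁻¹ *ᵥ w) := by
  have hN := isUnit_add_smul_one_of_coercive ha hM hc
  obtain ⟨v, rfl⟩ : ∃ v, (M + c • 1) *ᵥ v = w := ⟨_, mulVec_nonsing_inv_mulVec hN w⟩
  have hgap := dotProduct_inv_mulVec_sub_of_add_smul_one (c := c) hMs (isUnit_of_coercive ha hM) v
  have hNv : (M + c • 1) *ᵥ v ⬝ᵥ v = v ⬝ᵥ M *ᵥ v + c * (v ⬝ᵥ v) := by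
    rw [add_mulVec, smul_mulVec, one_mulVec, add_dotProduct, smul_dotProduct, smul_eq_mul,
      dotProduct_comm]
  rw [nonsing_inv_mulVec_mulVec hN]
  nlinarith [mul_le_mul_of_nonneg_left (hM v) hc,
    mul_le_mul_of_nonneg_left (mul_dotProduct_inv_mulVec_le ha hM v) (sq_nonneg c),
    mul_nonneg hc (dotProduct_self_nonneg v),
    mul_nonneg (pow_nonneg hc 3) (dotProduct_inv_mulVec_nonneg ha hM v)]

end Resolvent

theorem dotProduct_inv_gram_mulVec_le {m : Type*} [Fintype m] (A : Matrix m ι 𝕜)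
    (hA : IsUnit (Aᵀ * A)) (y : m → 𝕜) :
    Aᵀ *ᵥ y ⬝ᵥ (Aᵀ * A)⁻¹ *ᵥ (Aᵀ *ᵥ y) ≤ y ⬝ᵥ y := by
  set u := (Aᵀ * A)⁻¹ *ᵥ (Aᵀ *ᵥ y)
  have hu : Aᵀ *ᵥ (A *ᵥ u) = Aᵀ *ᵥ y := by
    rw [mulVec_mulVec, mulVec_nonsing_inv_mulVec hA]
  have hyu : Aᵀ *ᵥ y ⬝ᵥ u = y ⬝ᵥ A *ᵥ u := by
    rw [mulVec_transpose, ← dotProduct_mulVec]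
  have huu : A *ᵥ u ⬝ᵥ A *ᵥ u = y ⬝ᵥ A *ᵥ u := by
    rw [← hyu, ← hu, mulVec_transpose, dotProduct_mulVec]
  have h := dotProduct_self_nonneg (y - A *ᵥ u)
  simp only [sub_dotProduct, dotProduct_sub, huu, dotProduct_comm (A *ᵥ u) y] at h
  rw [hyu]
  linarith

end Matrix

theorem Rreg_sub_Rstar {n p : ℕ} (X : Matrix (Fin n) (Fin p) ℝ) (S : Finset (Fin p)) (t : ℝ)
    (y : Fin n → ℝ) :
    Rreg X S t y - Rstar X S y =
      (subcols X S)ᵀ *ᵥ y ⬝ᵥ ((subcols X S)ᵀ * subcols X S)⁻¹ *ᵥ ((subcols X S)ᵀ *ᵥ y) -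
        (subcols X S)ᵀ *ᵥ y ⬝ᵥ
          ((subcols X S)ᵀ * subcols X S + t⁻¹ • 1)⁻¹ *ᵥ ((subcols X S)ᵀ *ᵥ y) := by
  simp only [Rreg, Rstar, proj, sub_mulVec, one_mulVec, dotProduct_sub,
    dotProduct_mul_mul_transpose_mulVec]
  ring

theorem stmt_7_general {n p : ℕ} (hn : 1 ≤ n) (X : Matrix (Fin n) (Fin p) ℝ) (r : Finset (Fin p))
    (ν : ℝ) (hν : 0 < ν)
    (hmin : ∀ v : {j // j ∈ r} → ℝ,
      ν * (v ⬝ᵥ v) ≤ v ⬝ᵥ ((((n : ℝ)⁻¹) • ((subcols X r)ᵀ * subcols X r)).mulVec v))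
    (t : ℝ) (ht : 0 < t) (y : Fin n → ℝ) :
    0 ≤ Rreg X r t y - Rstar X r y ∧
      Rreg X r t y - Rstar X r y ≤ (y ⬝ᵥ y) / ((n : ℝ) * ν * t) := by
  set A := subcols X r
  have hn₀ : (0 : ℝ) < n := by exact_mod_cast hn
  have hnν : 0 < (n : ℝ) * ν := mul_pos hn₀ hν
  have hM : ∀ v, (n * ν) * (v ⬝ᵥ v) ≤ v ⬝ᵥ (Aᵀ * A) *ᵥ v := fun v => by
    have h := mul_le_mul_of_nonneg_left (hmin v) hn₀.le
    rwa [smul_mulVec, dotProduct_smul, smul_eq_mul, ← mul_assoc, ← mul_assoc,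
      mul_inv_cancel₀ hn₀.ne', one_mul] at h
  have hMs : (Aᵀ * A).IsSymm := by rw [IsSymm, transpose_mul, transpose_transpose]
  have hc : (0 : ℝ) ≤ t⁻¹ := inv_nonneg.mpr ht.le
  rw [Rreg_sub_Rstar]
  refine ⟨sub_nonneg.mpr (dotProduct_inv_add_smul_one_mulVec_le hnν hM hMs hc _), ?_⟩
  rw [le_div_iff₀ (mul_pos hnν ht)]
  calc _ = t * (n * ν * (Aᵀ *ᵥ y ⬝ᵥ (Aᵀ * A)⁻¹ *ᵥ (Aᵀ *ᵥ y) -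
          Aᵀ *ᵥ y ⬝ᵥ (Aᵀ * A + t⁻¹ • 1)⁻¹ *ᵥ (Aᵀ *ᵥ y))) := by ring
    _ ≤ t * (t⁻¹ * (Aᵀ *ᵥ y ⬝ᵥ (Aᵀ * A)⁻¹ *ᵥ (Aᵀ *ᵥ y))) :=
      mul_le_mul_of_nonneg_left
        (mul_sub_dotProduct_inv_add_smul_one_mulVec_le hnν hM hMs hc _) ht.le
    _ = Aᵀ *ᵥ y ⬝ᵥ (Aᵀ * A)⁻¹ *ᵥ (Aᵀ *ᵥ y) := by field_simp
    _ ≤ y ⬝ᵥ y := dotProduct_inv_gram_mulVec_le A (isUnit_of_coercive hnν hM) y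

/-- If `X_r` has full column rank with `λ_min(n⁻¹ X_rᵀ X_r) ≥ ν > 0`
(stated via the quadratic form) and `σ̃₀² > 0` (`t = σ̃₀²`), then for every `y ∈ ℝⁿ`,
`0 ≤ R_r − R_r^* ≤ ‖y‖₂² / (n ν σ̃₀²)`. -/
theorem stmt_7 {n p : ℕ} (hn : 1 ≤ n) (X : Matrix (Fin n) (Fin p) ℝ) (r : Finset (Fin p))
    (hrank : IsUnit ((subcols X r)ᵀ * subcols X r).det)
    (ν : ℝ) (hν : 0 < ν)
    (hmin : ∀ v : {j // j ∈ r} → ℝ,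
      ν * (v ⬝ᵥ v) ≤ v ⬝ᵥ ((((n : ℝ)⁻¹) • ((subcols X r)ᵀ * subcols X r)).mulVec v))
    (t : ℝ) (ht : 0 < t) (y : Fin n → ℝ) :
    0 ≤ Rreg X r t y - Rstar X r y ∧
      Rreg X r t y - Rstar X r y ≤ (y ⬝ᵥ y) / ((n : ℝ) * ν * t) :=
  stmt_7_general hn X r ν hν hmin t ht y
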